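/- Let ν ⊆ λ be partitions. Then, as an identity of rational functions in q, q^{n(λ)} α_λ(ν; q^{−1}) = ∏_{j≥1} q^{ binom(λ'_j − ν'_j, 2) + binom(ν'_j, 2) } [ λ'_j − ν'_{j+1} choose ν'_j − ν'_{j+1} ]_q, where α_λ(ν; q^{−1}) denotes the result of substituting q ↦ q^{−1} in the polynomial α_λ(ν;q). -/

import Mathlib

namespace KHL

/-- `conjC l j` is the `j`-th part (1-based) of the conjugate of the partition `l`. -/
def conjC (l : List ℕ) (j : ℕ) : ℕ := (l.filter (fun x => j ≤ x)).length

/-- `nstat λ = n(λ) = Σ_{i≥1} (i-1)·λ_i`. -/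
def nstat (l : List ℕ) : ℕ := ∑ i ∈ Finset.range l.length, i * l.getD i 0

/-- The Gaussian binomial coefficient `[n choose k]_q` as a polynomial in `ℤ[q]`. -/
noncomputable def qbinom : ℕ → ℕ → Polynomial ℤ
  | _, 0 => 1
  | 0, _ + 1 => 0
  | n + 1, k + 1 => qbinom n k + Polynomial.X ^ (k + 1) * qbinom n (k + 1)

/-- The finset of all partitions of `n`, as weakly decreasing lists of positive integers. -/
noncomputable def partitionsOf (n : ℕ) : Finset (List ℕ) :=
  Finset.image (fun p : Nat.Partition n => (Multiset.sort p.parts (· ≤ ·)).reverse) Finset.univ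

/-- The conjugate partition, as a list. -/
def conjList (l : List ℕ) : List ℕ := (List.range (l.headD 0)).map fun j => conjC l (j + 1)

/-- A semistandard Young tableau of shape `sh` (a partition, as a list of row lengths);
entries are positive inside the diagram (cell `(i,j)` with `j < sh_i`), `0` outside;
rows weakly increase, columns strictly increase. -/
structure SSYT (sh : List ℕ) where
  entry : ℕ → ℕ → ℕ
  zero_outside : ∀ i j, sh.getD i 0 ≤ j → entry i j = 0
  pos_inside : ∀ i j, j < sh.getD i 0 → 1 ≤ entry i j
  row_weak : ∀ i j, j + 1 < sh.getD i 0 → entry i j ≤ entry i (j + 1)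
  col_strict : ∀ i j, j < sh.getD (i + 1) 0 → entry i j < entry (i + 1) j

/-- The filling `f` of shape `sh` has weight `mu`: the entry `k+1` occurs `mu_{k+1}` times. -/
def WtIs (sh : List ℕ) (f : ℕ → ℕ → ℕ) (mu : List ℕ) : Prop :=
  ∀ k, {p : ℕ × ℕ | p.2 < sh.getD p.1 0 ∧ f p.1 p.2 = k + 1}.ncard = mu.getD k 0

/-- The Kostka number `K_{ημ}`: the number of SSYT of shape `η` and weight `μ`. -/
noncomputable def kostka (eta mu : List ℕ) : ℕ :=
  Nat.card {T : SSYT eta // WtIs eta T.entry mu}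

/- ### The Lascoux–Schützenberger charge -/

/-- charge of a standard word, given the positions of the letters `1, 2, …` in order:
letter 1 has index 0, and the index of `r+1` equals that of `r`, plus one if `r+1`
is located to the right of `r`; the charge is the sum of the indices. -/
def chargeStdAux : ℕ → ℕ → List ℕ → ℕ
  | _, _, [] => 0
  | prev, ind, p :: rest =>
    let ind' := if prev < p then ind + 1 else ind
    ind' + chargeStdAux p ind' rest

def chargeStd : List ℕ → ℕ
  | [] => 0
  | p :: rest => chargeStdAux p 0 rest

/-- positions of a word of length `n`, read leftwards starting just left of `s`, cyclically. -/
def cycOrder (n s : ℕ) : List ℕ := (List.range s).reverse ++ (List.range' s (n - s)).reverse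

/-- first position, leftwards-cyclically from `s`, carrying the letter `l`. -/
def findCyc (w : List ℕ) (l s : ℕ) : Option ℕ :=
  (cycOrder w.length s).find? fun i => w.getD i 0 = l

def extractAux (w : List ℕ) : ℕ → ℕ → ℕ → List ℕ
  | 0, _, _ => []
  | fuel + 1, s, l =>
    match findCyc w l s with
    | none => []
    | some p => p :: extractAux w fuel p (l + 1)

/-- positions of the extracted standard subword: the rightmost `1`, then cyclically
leftwards the first `2`, then the first `3`, etc. -/
def extract (w : List ℕ) : List ℕ :=
  if 1 ∈ w then
    (w.length - 1 - (w.reverse.findIdx (· = 1))) ::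
      extractAux w (w.foldr max 0) (w.length - 1 - (w.reverse.findIdx (· = 1))) 2
  else []

def removeIdx (w : List ℕ) (I : List ℕ) : List ℕ :=
  ((w.zipIdx).filter fun p => p.2 ∉ I).map Prod.fst

def chargeAux : ℕ → List ℕ → ℕ
  | 0, _ => 0
  | fuel + 1, w =>
    if (extract w).isEmpty then 0
    else chargeStd (extract w) + chargeAux fuel (removeIdx w (extract w))

/-- The Lascoux–Schützenberger charge of a word (of partition weight): the sum of the
charges of the successively extracted standard subwords. -/
def charge (w : List ℕ) : ℕ := chargeAux w.length w

/-- The reading word of a tableau: rows read left to right, starting from the bottom row. -/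
def readingWord {sh : List ℕ} (T : SSYT sh) : List ℕ :=
  ((List.range sh.length).reverse.map fun i =>
    (List.range (sh.getD i 0)).map fun j => T.entry i j).flatten

/-- The Kostka–Foulkes polynomial `K_{ηλ}(t) = Σ_T t^{c(T)}`, summed over all SSYT
of shape `η` and weight `λ`, where `c` is the Lascoux–Schützenberger charge. -/
noncomputable def kostkaFoulkes (eta lam : List ℕ) : Polynomial ℤ :=
  ∑ᶠ T : {T : SSYT eta // WtIs eta T.entry lam}, Polynomial.X ^ charge (readingWord T.1)

/-- `𝒫_{λμ}(t) = Σ_η K_{ημ} K_{ηλ}(t)`, summed over all partitions `η` of `|λ|`. -/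
noncomputable def Pcal (lam mu : List ℕ) : Polynomial ℤ :=
  ∑ eta ∈ partitionsOf lam.sum, (kostka eta mu : Polynomial ℤ) * kostkaFoulkes eta lam

/-- `ℛ_{λμ}(t) = Σ_η K_{ημ} K_{η'λ}(t)`, summed over all partitions `η` of `|λ|`. -/
noncomputable def Rcal (lam mu : List ℕ) : Polynomial ℤ :=
  ∑ eta ∈ partitionsOf lam.sum,
    (kostka eta mu : Polynomial ℤ) * kostkaFoulkes (conjList eta) lam


/-- Delsarte's polynomial `α_λ(ν;q)`: for a prime `p`, `α_λ(ν;p)` is the number of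
subgroups of type `ν` in a finite abelian `p`-group of type `λ`. -/
noncomputable def alphaPoly (lam nu : List ℕ) : Polynomial ℤ :=
  ∏ j ∈ Finset.Icc 1 (lam.headD 0),
    Polynomial.X ^ (conjC nu (j + 1) * (conjC lam j - conjC nu j)) *
      qbinom (conjC lam j - conjC nu (j + 1)) (conjC nu j - conjC nu (j + 1))

/-!
Both sides are products over the columns `j`. Since `n(λ) = Σ_j binom(λ'_j, 2)`, it suffices to
compare the `j`-th factors. With `a = λ'_j ≥ b = ν'_j ≥ c = ν'_{j+1}`, the `j`-th factor of the
left side is `q^{binom(a,2) - c(a-b)} [a-c choose b-c]_{q⁻¹}`, and the reflection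
`[m+n choose m]_{q⁻¹} = q^{-mn} [m+n choose m]_q` (a consequence of the two q-Pascal recurrences)
together with `binom(a,2) = binom(a-b,2) + binom(b,2) + b(a-b)` turns it into the right side.
-/

open Polynomial

lemma qbinom_eq_zero_of_lt : ∀ {n k : ℕ}, n < k → qbinom n k = 0
  | 0, _ + 1, _ => rfl
  | n + 1, k + 1, h => by
    rw [qbinom, qbinom_eq_zero_of_lt (by omega), qbinom_eq_zero_of_lt (by omega), mul_zero,
      add_zero]

lemma qbinom_zero_right (n : ℕ) : qbinom n 0 = 1 := by
  cases n <;> rfl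

lemma qbinom_self : ∀ n : ℕ, qbinom n n = 1
  | 0 => rfl
  | n + 1 => by rw [qbinom, qbinom_self n, qbinom_eq_zero_of_lt n.lt_succ_self, mul_zero, add_zero]

-- Indexing as `qbinom (a + b) a` keeps truncated subtraction out of the recurrences.
lemma qbinom_add_succ_succ (a b : ℕ) :
    qbinom (a + 1 + (b + 1)) (a + 1) =
      qbinom (a + (b + 1)) a + X ^ (a + 1) * qbinom (a + 1 + b) (a + 1) := by
  rw [show a + 1 + (b + 1) = a + (b + 1) + 1 by omega, qbinom,
    show a + (b + 1) = a + 1 + b by omega]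

lemma qbinom_add_succ_succ' : ∀ a b : ℕ,
    qbinom (a + 1 + (b + 1)) (a + 1) =
      qbinom (a + 1 + b) (a + 1) + X ^ (b + 1) * qbinom (a + (b + 1)) a
  | 0, 0 => by simp [qbinom]
  | 0, b + 1 => by
    have f1 := qbinom_add_succ_succ 0 (b + 1)
    have f0 := qbinom_add_succ_succ 0 b
    have s0 := qbinom_add_succ_succ' 0 b
    simp only [qbinom_zero_right] at *
    ring_nf at *
    linear_combination f1 + X * s0 - f0
  | a + 1, 0 => by
    have f1 := qbinom_add_succ_succ (a + 1) 0
    have f0 := qbinom_add_succ_succ a 0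
    have s0 := qbinom_add_succ_succ' a 0
    simp only [add_zero, qbinom_self] at *
    ring_nf at *
    linear_combination f1 + s0 - X * f0
  | a + 1, b + 1 => by
    have s1 := qbinom_add_succ_succ' a (b + 1)
    have s2 := qbinom_add_succ_succ' (a + 1) b
    have f1 := qbinom_add_succ_succ a (b + 1)
    have f2 := qbinom_add_succ_succ (a + 1) b
    rw [qbinom_add_succ_succ]
    ring_nf at *
    linear_combination s1 - X ^ (b + 2) * f1 + X ^ (a + 2) * s2 - f2

lemma add_choose_two (m n : ℕ) : (m + n).choose 2 = m.choose 2 + n.choose 2 + m * n := by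
  simp [Nat.add_choose_eq, Finset.Nat.antidiagonal_succ]
  ring

section Reflection

variable {K : Type*} [Field K] [Algebra ℤ K] {x : K}

lemma aeval_inv_qbinom_add_mul_pow (hx : x ≠ 0) :
    ∀ a b : ℕ, aeval x⁻¹ (qbinom (a + b) a) * x ^ (a * b) = aeval x (qbinom (a + b) a)
  | 0, b => by simp [qbinom_zero_right]
  | a + 1, 0 => by simp [qbinom_self]
  | a + 1, b + 1 => by
    have ih₁ := aeval_inv_qbinom_add_mul_pow hx a (b + 1)
    have ih₂ := aeval_inv_qbinom_add_mul_pow hx (a + 1) b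
    conv_lhs => rw [qbinom_add_succ_succ]
    conv_rhs => rw [qbinom_add_succ_succ']
    simp only [map_add, map_mul, map_pow, aeval_X] at *
    rw [← ih₁, ← ih₂, inv_pow]
    field_simp
    ring

lemma pow_choose_two_mul_aeval_inv (hx : x ≠ 0) {a b c : ℕ} (hcb : c ≤ b) (hba : b ≤ a) :
    x ^ a.choose 2 * aeval x⁻¹ (X ^ (c * (a - b)) * qbinom (a - c) (b - c)) =
      x ^ ((a - b).choose 2 + b.choose 2) * aeval x (qbinom (a - c) (b - c)) := by
  obtain ⟨e, rfl⟩ := Nat.exists_eq_add_of_le hcb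
  obtain ⟨d, rfl⟩ := Nat.exists_eq_add_of_le hba
  rw [show c + e + d - (c + e) = d by omega, show c + e + d - c = e + d by omega,
    show c + e - c = e by omega, ← aeval_inv_qbinom_add_mul_pow hx e d, add_choose_two]
  simp only [map_mul, map_pow, aeval_X, inv_pow]
  field_simp
  ring

end Reflection

lemma conjC_cons (x : ℕ) (l : List ℕ) (j : ℕ) :
    conjC (x :: l) j = (if j ≤ x then 1 else 0) + conjC l j := by
  by_cases h : j ≤ x <;> simp [conjC, h, add_comm]

lemma conjC_antitone (l : List ℕ) : Antitone (conjC l) := fun _ _ hij =>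
  (l.monotone_filter_right fun _ h => by simpa using hij.trans (by simpa using h)).length_le

lemma conjC_le_conjC_of_getD_le {j : ℕ} (hj : 0 < j) :
    ∀ {nu lam : List ℕ}, (∀ i, nu.getD i 0 ≤ lam.getD i 0) → conjC nu j ≤ conjC lam j
  | [], _, _ => by simp [conjC]
  | y :: nu, lam, hsub => by
    have ih := conjC_le_conjC_of_getD_le hj (nu := nu) (lam := lam.tail) fun i => by
      simpa using hsub (i + 1)
    cases lam with
    | nil =>
      have hy : y = 0 := by simpa using hsub 0
      rwa [conjC_cons, if_neg (by omega), zero_add]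
    | cons x lam =>
      have hyx : y ≤ x := by simpa using hsub 0
      rw [conjC_cons, conjC_cons]
      split_ifs <;> simp only [List.tail_cons] at ih <;> omega

lemma sum_Icc_ite_le {x M : ℕ} (hxM : x ≤ M) (f : ℕ → ℕ) :
    ∑ j ∈ Finset.Icc 1 M, (if j ≤ x then f j else 0) = ∑ j ∈ Finset.Icc 1 x, f j := by
  rw [← Finset.sum_filter]
  congr 1
  grind

lemma sum_conjC {l : List ℕ} {M : ℕ} (hM : ∀ x ∈ l, x ≤ M) :
    ∑ j ∈ Finset.Icc 1 M, conjC l j = l.sum := by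
  induction l with
  | nil => simp [conjC]
  | cons x l ih =>
    obtain ⟨hxM, hM⟩ := List.forall_mem_cons.1 hM
    rw [List.sum_cons, ← ih hM]
    simp [conjC_cons, Finset.sum_add_distrib, sum_Icc_ite_le hxM]

lemma sum_range_getD (l : List ℕ) : ∑ i ∈ Finset.range l.length, l.getD i 0 = l.sum := by
  induction l with
  | nil => simp
  | cons x l ih =>
    rw [List.length_cons, Finset.sum_range_succ']
    simp only [List.getD_cons_succ, List.getD_cons_zero, ih, List.sum_cons, add_comm]

lemma nstat_cons (x : ℕ) (l : List ℕ) : nstat (x :: l) = nstat l + l.sum := by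
  rw [nstat, nstat, List.length_cons, Finset.sum_range_succ', ← sum_range_getD]
  simp only [List.getD_cons_succ, add_mul, one_mul, Finset.sum_add_distrib, zero_mul, add_zero]

lemma le_headD_of_mem {l : List ℕ} (hl : l.Pairwise (· ≥ ·)) {x : ℕ} (hx : x ∈ l) :
    x ≤ l.headD 0 := by
  cases l with
  | nil => simp at hx
  | cons y l =>
    rcases List.mem_cons.1 hx with rfl | hx
    · rfl
    · exact (List.pairwise_cons.1 hl).1 x hx

lemma sum_choose_two_conjC {l : List ℕ} (hl : l.Pairwise (· ≥ ·)) {M : ℕ}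
    (hM : ∀ x ∈ l, x ≤ M) : ∑ j ∈ Finset.Icc 1 M, (conjC l j).choose 2 = nstat l := by
  induction l with
  | nil => simp [conjC, nstat]
  | cons x l ih =>
    obtain ⟨hxl, hl⟩ := List.pairwise_cons.1 hl
    obtain ⟨hxM, hM⟩ := List.forall_mem_cons.1 hM
    have hchoose (j : ℕ) : ((if j ≤ x then 1 else 0) + conjC l j).choose 2 =
        (conjC l j).choose 2 + if j ≤ x then conjC l j else 0 := by
      split_ifs <;> simp [add_choose_two]
    simp only [conjC_cons, hchoose, Finset.sum_add_distrib, ih hl hM, sum_Icc_ite_le hxM,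
      sum_conjC hxl, nstat_cons]

theorem stmt3_general (lam nu : List ℕ)
    (hlam : lam.Pairwise (· ≥ ·))
    (hsub : ∀ i, nu.getD i 0 ≤ lam.getD i 0) :
    (RatFunc.X : RatFunc ℚ) ^ nstat lam *
        Polynomial.aeval ((RatFunc.X : RatFunc ℚ)⁻¹) (alphaPoly lam nu) =
      ∏ j ∈ Finset.Icc 1 (lam.headD 0),
        (RatFunc.X : RatFunc ℚ) ^
            (Nat.choose (conjC lam j - conjC nu j) 2 + Nat.choose (conjC nu j) 2) *
          Polynomial.aeval (RatFunc.X : RatFunc ℚ)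
            (qbinom (conjC lam j - conjC nu (j + 1)) (conjC nu j - conjC nu (j + 1))) := by
  rw [alphaPoly, map_prod, ← sum_choose_two_conjC hlam fun _ => le_headD_of_mem hlam,
    ← Finset.prod_pow_eq_pow_sum, ← Finset.prod_mul_distrib]
  refine Finset.prod_congr rfl fun j hj => ?_
  exact pow_choose_two_mul_aeval_inv RatFunc.X_ne_zero (conjC_antitone nu j.le_succ)
    (conjC_le_conjC_of_getD_le (Finset.mem_Icc.1 hj).1 hsub)

/-- For partitions `ν ⊆ λ`, as an identity of rational functions in `q`,
`q^{n(λ)} α_λ(ν; q⁻¹) = ∏_{j≥1} q^{C(λ'_j-ν'_j,2)+C(ν'_j,2)} [λ'_j-ν'_{j+1} choose ν'_j-ν'_{j+1}]_q`. -/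
theorem stmt3 (lam nu : List ℕ)
    (hlam : lam.Pairwise (· ≥ ·)) (hlpos : ∀ x ∈ lam, 0 < x)
    (hnu : nu.Pairwise (· ≥ ·)) (hnpos : ∀ x ∈ nu, 0 < x)
    (hsub : ∀ i, nu.getD i 0 ≤ lam.getD i 0) :
    (RatFunc.X : RatFunc ℚ) ^ nstat lam *
        Polynomial.aeval ((RatFunc.X : RatFunc ℚ)⁻¹) (alphaPoly lam nu) =
      ∏ j ∈ Finset.Icc 1 (lam.headD 0),
        (RatFunc.X : RatFunc ℚ) ^
            (Nat.choose (conjC lam j - conjC nu j) 2 + Nat.choose (conjC nu j) 2) *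
          Polynomial.aeval (RatFunc.X : RatFunc ℚ)
            (qbinom (conjC lam j - conjC nu (j + 1)) (conjC nu j - conjC nu (j + 1))) :=
  stmt3_general lam nu hlam hsub

end KHL
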